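/- arXiv:1402.7211 — 2 statements merged into one kernel-verified Lean document; each statement's English description precedes it below -/
import Mathlib

section
/- Let T be a triangulated category with products, and C, G two Σ-stable sets of objects such that Ψ(C)^s ⊆ Φ(G) for some positive integer s, where Ψ(C) is the ideal of C-cophantoms and Φ(G) the ideal of G-phantoms. Then every object Y of T fits into a triangle X →^φ Y → Z → ΣX with Z ∈ Prod_s(C) and φ ∈ Φ(G). -/
open CategoryTheory CategoryTheory.Limits CategoryTheory.Pretriangulated

universe v u

variable {C : Type u} [Category.{v} C]

def SigmaStable [HasShift C ℤ] (S : Set C) : Prop :=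
  ∀ X ∈ S, X⟦(1 : ℤ)⟧ ∈ S ∧ X⟦(-1 : ℤ)⟧ ∈ S

def IsPhantom [Limits.HasZeroMorphisms C] (𝒢 : Set C) {X Y : C} (φ : X ⟶ Y) : Prop :=
  ∀ G ∈ 𝒢, ∀ f : G ⟶ X, f ≫ φ = 0

def IsCophantom [Limits.HasZeroMorphisms C] (𝒞 : Set C) {X Y : C} (ψ : X ⟶ Y) : Prop :=
  ∀ c ∈ 𝒞, ∀ g : Y ⟶ c, ψ ≫ g = 0

def ProdCls (𝒞 : Set C) : Set C :=
  {Z | ∃ (ι : Type (max u v)) (f : ι → C) (_ : ∀ i, f i ∈ 𝒞) (_ : HasProduct f)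
    (r : (∏ᶜ f) ⟶ Z) (s : Z ⟶ ∏ᶜ f), s ≫ r = 𝟙 Z}

/-- `ProdN 𝒞 n` is `Prod_{n+1}(𝒞)`: `Prod_1(𝒞) = Prod 𝒞` and `Prod_{n+1}(𝒞)` consists
of the objects `Y` fitting into a triangle `X ⟶ Y ⟶ Z ⟶ ΣX` with `X ∈ Prod_1(𝒞)` and
`Z ∈ Prod_n(𝒞)`. -/
def ProdN [Preadditive C] [HasZeroObject C] [HasShift C ℤ]
    [∀ n : ℤ, (shiftFunctor C n).Additive] [Pretriangulated C]
    (𝒞 : Set C) : ℕ → Set C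
  | 0 => ProdCls 𝒞
  | n + 1 => {Y | ∃ (X Z : C) (f : X ⟶ Y) (g : Y ⟶ Z) (h : Z ⟶ X⟦(1 : ℤ)⟧),
      Triangle.mk f g h ∈ (distTriang C) ∧ X ∈ ProdCls 𝒞 ∧ Z ∈ ProdN 𝒞 n}

/-- `compPow I n` : composites of `n+1` maps each satisfying `I`; these generate the
ideal `I^{n+1}`. -/
def compPow (I : MorphismProperty C) : ℕ → MorphismProperty C
  | 0 => I
  | n + 1 => fun X Z f => ∃ (Y : C) (g : X ⟶ Y) (h : Y ⟶ Z),
      I g ∧ compPow I n h ∧ f = g ≫ h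

/- Proof idea. Induct on `n`. For `n = 0`, map `Y` to the product `P` of all objects of `𝒞` under
it; the fibre `X ⟶ Y` of `u : Y ⟶ P` is a cophantom because every map from `Y` to `𝒞` factors
through `u`. For the step, given `Xₙ ⟶ Y ⟶ Zₙ ⟶ Xₙ⟦1⟧`, take such a `u : Xₙ ⟶ P` and the extension
`W` of `Zₙ` by `P` classified by `δₙ ≫ u⟦1⟧'`. The fibre `X' ⟶ Y` of a lift `Y ⟶ W` of `Y ⟶ Zₙ`
maps to `Xₙ` by some `t`, and `t ≫ u` factors through `X' ⟶ Y`, hence through the cophantom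
`Xₙ ⟶ Y`, so `t` is a cophantom. Building `W` before `X'` replaces the octahedral axiom, which a
pretriangulated category need not satisfy. -/

section Cophantoms

variable [HasZeroMorphisms C] {𝒞 : Set C}

def cophantoms (𝒞 : Set C) : MorphismProperty C := fun _ _ ψ => IsCophantom 𝒞 ψ

lemma IsCophantom.comp_right {X Y Z : C} {ψ : X ⟶ Y} (hψ : IsCophantom 𝒞 ψ) (g : Y ⟶ Z) :
    IsCophantom 𝒞 (ψ ≫ g) := fun c hc γ => by
  rw [Category.assoc, hψ c hc]

lemma IsCophantom.comp_left {X Y Z : C} (f : X ⟶ Y) {ψ : Y ⟶ Z} (hψ : IsCophantom 𝒞 ψ) :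
    IsCophantom 𝒞 (f ≫ ψ) := fun c hc γ => by
  rw [Category.assoc, hψ c hc, comp_zero]

lemma isCophantom_zero (X Y : C) : IsCophantom 𝒞 (0 : X ⟶ Y) := fun _ _ _ => zero_comp

end Cophantoms

lemma compPow_le {I : MorphismProperty C}
    (hI : ∀ ⦃X Y Z : C⦄ (f : X ⟶ Y) (g : Y ⟶ Z), I f → I (f ≫ g)) : ∀ n, compPow I n ≤ I
  | 0 => le_rfl
  | _ + 1 => fun _ _ _ ⟨_, f, g, hf, _, hfg⟩ => hfg ▸ hI f g hf

def IsPreenvelope (𝒞 : Set C) {X P : C} (u : X ⟶ P) : Prop :=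
  ∀ c ∈ 𝒞, ∀ γ : X ⟶ c, ∃ π : P ⟶ c, u ≫ π = γ

lemma exists_isPreenvelope_prodCls [HasProducts.{max u v} C] (𝒞 : Set C) (X : C) :
    ∃ (P : C) (u : X ⟶ P), P ∈ ProdCls 𝒞 ∧ IsPreenvelope 𝒞 u := by
  let f : ((c : 𝒞) × (X ⟶ (c : C))) → C := fun i => i.1
  refine ⟨∏ᶜ f, Pi.lift fun i => i.2, ⟨_, f, fun i => i.1.2, inferInstance, 𝟙 _, 𝟙 _, by simp⟩,
    fun c hc γ => ⟨Pi.π f ⟨⟨c, hc⟩, γ⟩, by simp⟩⟩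

lemma IsPreenvelope.isCophantom_of_comp [HasZeroMorphisms C] {𝒞 : Set C} {X X' P : C}
    {u : X ⟶ P} (hu : IsPreenvelope 𝒞 u) {t : X' ⟶ X} (ht : IsCophantom 𝒞 (t ≫ u)) : IsCophantom 𝒞 t := fun c hc γ => by
  obtain ⟨π, rfl⟩ := hu c hc γ
  rw [← Category.assoc, ht c hc]

section Pretriangulated

variable [Preadditive C] [HasZeroObject C] [HasShift C ℤ]
  [∀ n : ℤ, (shiftFunctor C n).Additive] [Pretriangulated C]

lemma Triangle.yoneda_exact₁ (T : Triangle C) (hT : T ∈ distTriang C) {A : C}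
    (f : T.obj₁ ⟶ A) (hf : T.mor₃ ≫ f⟦(1 : ℤ)⟧' = 0) : ∃ g : T.obj₂ ⟶ A, f = T.mor₁ ≫ g := by
  obtain ⟨g, hg⟩ : ∃ g : T.obj₂⟦(1 : ℤ)⟧ ⟶ A⟦(1 : ℤ)⟧, f⟦(1 : ℤ)⟧' = (-T.mor₁⟦(1 : ℤ)⟧') ≫ g :=
    let ⟨g, hg⟩ := Triangle.yoneda_exact₃ _ (rot_of_distTriang _ hT) _ hf; ⟨g, hg⟩
  refine ⟨(shiftFunctor C (1 : ℤ)).preimage (-g), (shiftFunctor C (1 : ℤ)).map_injective ?_⟩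
  rw [Functor.map_comp, Functor.map_preimage, hg]
  simp

variable [HasProducts.{max u v} C] (𝒞 : Set C)

lemma exists_triangle_isCophantom_succ {X Y Z : C} {φ : X ⟶ Y} {v : Y ⟶ Z}
    {δ : Z ⟶ X⟦(1 : ℤ)⟧} (hT : Triangle.mk φ v δ ∈ distTriang C) (hφ : IsCophantom 𝒞 φ)
    {n : ℕ} (hZ : Z ∈ ProdN 𝒞 n) :
    ∃ (X' W : C) (t : X' ⟶ X) (w : Y ⟶ W) (δ' : W ⟶ X'⟦(1 : ℤ)⟧),
      Triangle.mk (t ≫ φ) w δ' ∈ distTriang C ∧ W ∈ ProdN 𝒞 (n + 1) ∧ IsCophantom 𝒞 t := by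
  obtain ⟨P, u, hP, hu⟩ := exists_isPreenvelope_prodCls 𝒞 X
  have hvδ : v ≫ δ = 0 := comp_distTriang_mor_zero₂₃ _ hT
  obtain ⟨W, q, p, hW⟩ := distinguished_cocone_triangle₂ (δ ≫ u⟦(1 : ℤ)⟧')
  obtain ⟨w, hw⟩ : ∃ w : Y ⟶ W, v = w ≫ p := Triangle.coyoneda_exact₃ _ hW v (by
    change v ≫ δ ≫ u⟦(1 : ℤ)⟧' = 0
    rw [← Category.assoc, hvδ, zero_comp])
  obtain ⟨X', φ', δ', hT'⟩ := distinguished_cocone_triangle₁ w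
  obtain ⟨t, ht₁, ht₃⟩ : ∃ t : X' ⟶ X, φ' ≫ 𝟙 Y = t ≫ φ ∧ δ' ≫ t⟦(1 : ℤ)⟧' = p ≫ δ :=
    complete_distinguished_triangle_morphism₁ _ _ hT' hT (𝟙 Y) p
      (by change w ≫ p = 𝟙 Y ≫ v; rw [Category.id_comp, hw])
  rw [Category.comp_id] at ht₁
  have hpδu : p ≫ δ ≫ u⟦(1 : ℤ)⟧' = 0 := comp_distTriang_mor_zero₂₃ _ hW
  obtain ⟨r, hr⟩ : ∃ r : Y ⟶ P, t ≫ u = φ' ≫ r := Triangle.yoneda_exact₁ _ hT' (t ≫ u) (by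
    change δ' ≫ (t ≫ u)⟦(1 : ℤ)⟧' = 0
    rw [Functor.map_comp, reassoc_of% ht₃, hpδu])
  have htu : IsCophantom 𝒞 (t ≫ u) := by
    rw [hr, ht₁, Category.assoc]
    exact (hφ.comp_right r).comp_left t
  exact ⟨X', W, t, w, δ', ht₁ ▸ hT', ⟨P, Z, q, p, _, hW, hP, hZ⟩, hu.isCophantom_of_comp htu⟩

lemma exists_triangle_compPow_cophantoms (n : ℕ) (Y : C) :
    ∃ (X Z : C) (φ : X ⟶ Y) (g : Y ⟶ Z) (δ : Z ⟶ X⟦(1 : ℤ)⟧),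
      Triangle.mk φ g δ ∈ distTriang C ∧ Z ∈ ProdN 𝒞 n ∧ compPow (cophantoms 𝒞) n φ := by
  induction n with
  | zero =>
    obtain ⟨P, u, hP, hu⟩ := exists_isPreenvelope_prodCls 𝒞 Y
    obtain ⟨X, φ, δ, hT⟩ := distinguished_cocone_triangle₁ u
    refine ⟨X, P, φ, u, δ, hT, hP, hu.isCophantom_of_comp ?_⟩
    have hφu : φ ≫ u = 0 := comp_distTriang_mor_zero₁₂ _ hT
    rw [hφu]
    exact isCophantom_zero _ _
  | succ n ih =>
    obtain ⟨X, Z, φ, v, δ, hT, hZ, hφ⟩ := ih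
    obtain ⟨X', W, t, w, δ', hT', hW, ht⟩ := exists_triangle_isCophantom_succ 𝒞 hT
      (compPow_le (fun _ _ _ _ g hf => hf.comp_right g) n φ hφ) hZ
    exact ⟨X', W, t ≫ φ, w, δ', hT', hW, X, t, φ, ht, hφ, rfl⟩

end Pretriangulated

/-- If `Ψ(𝒞)^s ⊆ Φ(𝒢)`, then every `Y` fits into a triangle `X ⟶ Y ⟶ Z ⟶ ΣX` with
`Z ∈ Prod_s(𝒞)` and `φ : X ⟶ Y` a `𝒢`-phantom. -/
theorem stmt7 [Preadditive C] [HasZeroObject C] [HasShift C ℤ]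
    [∀ n : ℤ, (shiftFunctor C n).Additive] [Pretriangulated C]
    [HasProducts.{max u v} C]
    (𝒞 𝒢 : Set C) (h𝒞 : SigmaStable 𝒞) (h𝒢 : SigmaStable 𝒢)
    (s : ℕ) (hs : 1 ≤ s)
    (hPow : ∀ ⦃X Y : C⦄ (f : X ⟶ Y),
      compPow (fun _ _ ψ => IsCophantom 𝒞 ψ) (s - 1) f → IsPhantom 𝒢 f) :
    ∀ Y : C, ∃ (X Z : C) (φ : X ⟶ Y) (g : Y ⟶ Z) (δ : Z ⟶ X⟦(1 : ℤ)⟧),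
      Triangle.mk φ g δ ∈ (distTriang C) ∧ Z ∈ ProdN 𝒞 (s - 1) ∧ IsPhantom 𝒢 φ := by
  intro Y
  obtain ⟨X, Z, φ, g, δ, hT, hZ, hφ⟩ := exists_triangle_compPow_cophantoms 𝒞 (s - 1) Y
  exact ⟨X, Z, φ, g, δ, hT, hZ, hPow φ hφ⟩
end

section
/- Let T be a triangulated category with products and coproducts admitting a set of symmetric generators; that is, a generating set G and a set C such that for every map f: X → Y in T, the maps Hom(G,X) → Hom(G,Y) are surjective for all G ∈ G if and only if the maps Hom(Y,C) → Hom(X,C) are injective for all C ∈ C. Then, after completing f to a triangle W → X →^f Y → ΣW, this symmetry condition is equivalent to the equality of ideals Φ(G) = Ψ(C) (after Σ-closure of G and C). -/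
/-!
On a distinguished triangle `X ⟶[f] Y ⟶[g] Z ⟶ X⟦1⟧`, exactness of `Hom(G, -)` and `Hom(-, c)`
shows that `f` is surjective on `Hom(G, -)` for all `G ∈ 𝒢` iff `g` is a `𝒢`-phantom, and
injective on `Hom(-, c)` for all `c ∈ 𝒞` iff `g` is a `𝒞`-cophantom. So the symmetry condition
for `f` is the phantom/cophantom condition for `g`; as every map is both the first and the
second map of a distinguished triangle, the two conditions over all maps agree.
-/

open CategoryTheory CategoryTheory.Limits CategoryTheory.Pretriangulated

universe v u

variable {C : Type u} [Category.{v} C]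

namespace CategoryTheory.Pretriangulated.Triangle

variable [Preadditive C] [HasZeroObject C] [HasShift C ℤ]
  [∀ n : ℤ, (CategoryTheory.shiftFunctor C n).Additive] [Pretriangulated C]
  {T : Triangle C} (hT : T ∈ distTriang C)
include hT

lemma surjective_comp_mor₁_iff (G : C) :
    Function.Surjective (fun g : G ⟶ T.obj₁ => g ≫ T.mor₁) ↔
      ∀ a : G ⟶ T.obj₂, a ≫ T.mor₂ = 0 := by
  constructor
  · intro hsurj a
    obtain ⟨b, rfl⟩ := hsurj a
    rw [Category.assoc, comp_distTriang_mor_zero₁₂ _ hT, comp_zero]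
  · intro hzero a
    obtain ⟨b, hb⟩ := coyoneda_exact₂ _ hT a (hzero a)
    exact ⟨b, hb.symm⟩

lemma injective_mor₁_comp_iff (c : C) :
    Function.Injective (fun g : T.obj₂ ⟶ c => T.mor₁ ≫ g) ↔
      ∀ b : T.obj₃ ⟶ c, T.mor₂ ≫ b = 0 := by
  change Function.Injective (Preadditive.leftComp c T.mor₁) ↔ _
  rw [injective_iff_map_eq_zero]
  constructor
  · intro hinj b
    apply hinj
    change T.mor₁ ≫ T.mor₂ ≫ b = 0
    rw [← Category.assoc, comp_distTriang_mor_zero₁₂ _ hT, zero_comp]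
  · intro hzero a ha
    obtain ⟨b, rfl⟩ := yoneda_exact₂ _ hT a ha
    exact hzero b

lemma symmetric_mor₁_iff (𝒢 𝒞 : Set C) :
    ((∀ G ∈ 𝒢, Function.Surjective (fun g : G ⟶ T.obj₁ => g ≫ T.mor₁)) ↔
        (∀ c ∈ 𝒞, Function.Injective (fun g : T.obj₂ ⟶ c => T.mor₁ ≫ g))) ↔
      (IsPhantom 𝒢 T.mor₂ ↔ IsCophantom 𝒞 T.mor₂) := by
  simp only [IsPhantom, IsCophantom, surjective_comp_mor₁_iff hT,
    injective_mor₁_comp_iff hT]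

end CategoryTheory.Pretriangulated.Triangle

/-- For Σ-stable sets `𝒢`, `𝒞`, Krause's symmetry condition — for every map
`f : X ⟶ Y`, the maps `Hom(G,X) → Hom(G,Y)` are surjective for all `G ∈ 𝒢` iff the
maps `Hom(Y,c) → Hom(X,c)` are injective for all `c ∈ 𝒞` — is equivalent (via
completing maps to triangles) to the equality of ideals `Φ(𝒢) = Ψ(𝒞)`. -/
theorem stmt12 [Preadditive C] [HasZeroObject C] [HasShift C ℤ]
    [∀ n : ℤ, (shiftFunctor C n).Additive] [Pretriangulated C]
    [HasProducts.{max u v} C] [HasCoproducts.{max u v} C]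
    (𝒢 𝒞 : Set C) (h𝒢 : SigmaStable 𝒢) (h𝒞 : SigmaStable 𝒞)
    (hgen : ∀ X : C, (∀ G ∈ 𝒢, ∀ f : G ⟶ X, f = 0) → IsZero X) :
    (∀ {X Y : C} (f : X ⟶ Y),
        (∀ G ∈ 𝒢, Function.Surjective (fun g : G ⟶ X => g ≫ f)) ↔
        (∀ c ∈ 𝒞, Function.Injective (fun g : Y ⟶ c => f ≫ g))) ↔
    (∀ {X Y : C} (φ : X ⟶ Y), IsPhantom 𝒢 φ ↔ IsCophantom 𝒞 φ) := by
  constructor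
  · intro hsym X Y φ
    obtain ⟨W, w, _, hT⟩ := distinguished_cocone_triangle₁ φ
    exact (Triangle.symmetric_mor₁_iff hT 𝒢 𝒞).1 (hsym w)
  · intro hphantom X Y f
    obtain ⟨Z, g, _, hT⟩ := distinguished_cocone_triangle f
    exact (Triangle.symmetric_mor₁_iff hT 𝒢 𝒞).2 (hphantom g)
end
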